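/- arXiv:2303.03293 — 3 statements merged into one kernel-verified Lean document; each statement's English description precedes it below -/
import Mathlib

section
/- (Multinomial-to-binomial stick-breaking decomposition.) Let E ≥ 1, let w : Fin E → ℕ with total n = ∑_{e} w(e), and let θ : Fin E → ℝ satisfy θ(e) ≥ 0 for all e, ∑_{e} θ(e) = 1, and ∑_{i<e} θ(i) < 1 for every e. Define for each e the remaining count r(e) := n − ∑_{i<e} w(i) and the stick-breaking fraction θ̂(e) := θ(e) / (1 − ∑_{i<e} θ(i)). Then the multinomial probability weight factors as a product of binomial probability weights: (n! / ∏_{e} w(e)!) · ∏_{e} θ(e)^{w(e)} = ∏_{e} [ C(r(e), w(e)) · θ̂(e)^{w(e)} · (1 − θ̂(e))^{r(e) − w(e)} ], where all factorials and binomial coefficients are cast to ℝ and C(n,k) denotes the binomial coefficient. -/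
/-!
Write `r k = n - ∑_{i<k} w i` and `s k = 1 - ∑_{i<k} θ i` for the count and the stick remaining
before index `k`. Since `r e - w e = r (e + 1)` and `1 - θ e / s e = s (e + 1) / s e`, the `e`-th
binomial factor is `θ e ^ w e / (w e)!` times `g (e + 1) / g e`, where `g k = s k ^ r k / (r k)!`.
The product of these ratios telescopes to `g E / g 0 = 1 / (1 / n!)`, as `r E = 0`.
-/

open Finset Nat

theorem Finset.eq_prod_range_div₀ {K : Type*} [Field K] (f : ℕ → K) (n : ℕ)
    (hf : ∀ i < n, f i ≠ 0) : f n = f 0 * ∏ i ∈ range n, f (i + 1) / f i := by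
  induction n with
  | zero => simp
  | succ n ih =>
    rw [prod_range_succ, ← mul_assoc, ← ih fun i hi => hf i (by omega),
      mul_div_cancel₀ _ (hf n n.lt_succ_self)]

theorem choose_mul_div_pow_mul_one_sub_div_pow {K : Type*} [Field K] [CharZero K] {r k : ℕ}
    (hk : k ≤ r) {s : K} (hs : s ≠ 0) (t : K) :
    (r.choose k : K) * (t / s) ^ k * (1 - t / s) ^ (r - k) =
      t ^ k / k ! * ((s - t) ^ (r - k) / (r - k)! / (s ^ r / r !)) := by
  have hr : s ^ r = s ^ k * s ^ (r - k) := by rw [← pow_add, Nat.add_sub_cancel' hk]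
  rw [Nat.cast_choose K hk, one_sub_div hs, div_pow, div_pow, hr]
  field_simp

namespace Fin

variable {M : Type*} [AddCommMonoid M] {E : ℕ}

def prefixSum (f : Fin E → M) (k : ℕ) : M := ∑ i : Fin E with i.val < k, f i

theorem prefixSum_val (f : Fin E → M) (e : Fin E) : prefixSum f e = ∑ i ∈ Iio e, f i := by
  simp only [prefixSum, val_fin_lt, filter_gt_eq_Iio]

theorem prefixSum_zero (f : Fin E → M) : prefixSum f 0 = 0 := by
  simp [prefixSum]

theorem prefixSum_succ (f : Fin E → M) (e : Fin E) :
    prefixSum f (e + 1) = prefixSum f e + f e := by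
  simp only [prefixSum, Nat.lt_succ_iff, val_fin_le, val_fin_lt, filter_ge_eq_Iic,
    filter_gt_eq_Iio, sum_Iio_add_eq_sum_Iic]

theorem prefixSum_of_le (f : Fin E → M) {k : ℕ} (hk : E ≤ k) : prefixSum f k = ∑ i, f i := by
  simp [prefixSum, fun i : Fin E => i.2.trans_le hk]

theorem prefixSum_le_sum [Preorder M] [CanonicallyOrderedAdd M] (f : Fin E → M) (k : ℕ) :
    prefixSum f k ≤ ∑ i, f i :=
  sum_le_sum_of_subset (filter_subset _ _)

end Fin

theorem multinomial_stick_breaking_general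
    (E : ℕ) (w : Fin E → ℕ) (n : ℕ) (hn : n = ∑ e, w e)
    (θ : Fin E → ℝ)
    (hθlt : ∀ e, ∑ i ∈ Finset.Iio e, θ i < 1) :
    (Nat.factorial n : ℝ) / (∏ e, (Nat.factorial (w e) : ℝ)) * ∏ e, θ e ^ w e =
      ∏ e,
        ((Nat.choose (n - ∑ i ∈ Finset.Iio e, w i) (w e) : ℝ) *
          (θ e / (1 - ∑ i ∈ Finset.Iio e, θ i)) ^ w e *
          (1 - θ e / (1 - ∑ i ∈ Finset.Iio e, θ i)) ^
            ((n - ∑ i ∈ Finset.Iio e, w i) - w e)) := by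
  simp only [← Fin.prefixSum_val]
  set W := Fin.prefixSum w
  set T := Fin.prefixSum θ
  let g : ℕ → ℝ := fun k => (1 - T k) ^ (n - W k) / (n - W k)!
  have hT : ∀ e : Fin E, 1 - T e ≠ 0 := fun e =>
    (sub_pos.2 ((Fin.prefixSum_val θ e).trans_lt (hθlt e))).ne'
  have hfactor : ∀ e : Fin E,
      ((n - W e).choose (w e) : ℝ) * (θ e / (1 - T e)) ^ w e *
        (1 - θ e / (1 - T e)) ^ (n - W e - w e) = θ e ^ w e / (w e)! * (g (e + 1) / g e) := by
    intro e
    have hWsucc : W (e + 1) = W e + w e := Fin.prefixSum_succ w e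
    have hTsucc : T (e + 1) = T e + θ e := Fin.prefixSum_succ θ e
    have hWn : W (e + 1) ≤ n := hn ▸ Fin.prefixSum_le_sum w _
    have hr : n - W e - w e = n - W (e + 1) := by omega
    have hs : 1 - T e - θ e = 1 - T (e + 1) := by rw [hTsucc]; ring
    rw [choose_mul_div_pow_mul_one_sub_div_pow (by omega) (hT e), hr, hs]
  have hg0 : g 0 = 1 / n ! := by simp [g, W, T, Fin.prefixSum_zero]
  have hgE : g E = 1 := by simp [g, W, Fin.prefixSum_of_le _ le_rfl, ← hn]
  have htelescope : ∏ i ∈ range E, g (i + 1) / g i = n ! := by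
    have h := eq_prod_range_div₀ g E fun k hk => by
      have := hT ⟨k, hk⟩
      positivity
    rw [hg0, hgE] at h
    field_simp at h
    exact h.symm
  rw [prod_congr rfl fun e _ => hfactor e, prod_mul_distrib, prod_div_distrib,
    Fin.prod_univ_eq_prod_range (fun i => g (i + 1) / g i), htelescope]
  ring

/-- Multinomial-to-binomial stick-breaking decomposition: the multinomial probability
weight factors as a product of binomial probability weights. -/
theorem multinomial_stick_breaking
    (E : ℕ) (hE : 1 ≤ E) (w : Fin E → ℕ) (n : ℕ) (hn : n = ∑ e, w e)
    (θ : Fin E → ℝ) (hθ0 : ∀ e, 0 ≤ θ e) (hθsum : ∑ e, θ e = 1)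
    (hθlt : ∀ e, ∑ i ∈ Finset.Iio e, θ i < 1) :
    (Nat.factorial n : ℝ) / (∏ e, (Nat.factorial (w e) : ℝ)) * ∏ e, θ e ^ w e =
      ∏ e,
        ((Nat.choose (n - ∑ i ∈ Finset.Iio e, w i) (w e) : ℝ) *
          (θ e / (1 - ∑ i ∈ Finset.Iio e, θ i)) ^ w e *
          (1 - θ e / (1 - ∑ i ∈ Finset.Iio e, θ i)) ^
            ((n - ∑ i ∈ Finset.Iio e, w i) - w e)) :=
  multinomial_stick_breaking_general E w n hn θ hθlt
end

section
/- (Telescoping of the multinomial probability term.) Let E ≥ 1, let w : Fin E → ℕ, and let θ : Fin E → ℝ satisfy θ(e) ≥ 0 for all e, ∑_{e} θ(e) = 1, and ∑_{i<e} θ(i) < 1 for every e. Define θ̂(e) := θ(e) / (1 − ∑_{i<e} θ(i)). Then ∏_{e} θ(e)^{w(e)} = ∏_{e} [ θ̂(e)^{w(e)} · (1 − θ̂(e))^{∑_{i>e} w(i)} ]. -/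
/-!
Write `S k = 1 - ∑_{i<k} θ i` for the stick left before component `k` and `W k = ∑_{i≥k} w i`.
Since `1 - θ̂ e = S (e+1) / S e`, the `e`-th factor on the right is
`θ e ^ w e * (S (e+1) ^ W (e+1) / S e ^ W e)`, and these ratios telescope to
`S E ^ W E / S 0 ^ W 0 = 1`, because `S 0 = 1` and `W E = 0`.
-/

open Finset

variable {K : Type*} [Field K]

lemma div_pow_mul_one_sub_div_pow {s : K} (hs : s ≠ 0) (t : K) (a b : ℕ) :
    (t / s) ^ a * (1 - t / s) ^ b = t ^ a * ((s - t) ^ b / s ^ (a + b)) := by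
  rw [one_sub_div hs, div_pow, div_pow, pow_add]
  field_simp

lemma prod_range_div_mul_eq (f : ℕ → K) {n : ℕ} (hf : ∀ i < n, f i ≠ 0) :
    (∏ i ∈ range n, f (i + 1) / f i) * f 0 = f n := by
  induction n with
  | zero => simp
  | succ n ih =>
    rw [prod_range_succ, mul_right_comm, ih fun i hi => hf i (by omega),
      mul_div_cancel₀ _ (hf n n.lt_succ_self)]

namespace Fin
variable {n : ℕ} (e : Fin n)

lemma filter_val_lt_eq_Iio : univ.filter (fun i : Fin n => (i : ℕ) < e) = Iio e := by
  ext; simp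

lemma filter_val_lt_succ_eq_Iic : univ.filter (fun i : Fin n => (i : ℕ) < e + 1) = Iic e := by
  ext; simp

lemma filter_le_val_eq_Ici : univ.filter (fun i : Fin n => (e : ℕ) ≤ i) = Ici e := by
  ext; simp

lemma filter_succ_le_val_eq_Ioi : univ.filter (fun i : Fin n => (e : ℕ) + 1 ≤ i) = Ioi e := by
  ext; simp

end Fin

namespace StickBreaking

variable {n : ℕ}

def remainingMass (θ : Fin n → K) (k : ℕ) : K :=
  1 - ∑ i ∈ univ.filter (fun i : Fin n => (i : ℕ) < k), θ i

def tailWeight (w : Fin n → ℕ) (k : ℕ) : ℕ :=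
  ∑ i ∈ univ.filter (fun i : Fin n => k ≤ (i : ℕ)), w i

lemma remainingMass_zero (θ : Fin n → K) : remainingMass θ 0 = 1 := by
  simp [remainingMass]

lemma remainingMass_val (θ : Fin n → K) (e : Fin n) :
    remainingMass θ e = 1 - ∑ i ∈ Iio e, θ i := by
  rw [remainingMass, Fin.filter_val_lt_eq_Iio]

lemma remainingMass_val_add_one (θ : Fin n → K) (e : Fin n) :
    remainingMass θ (e + 1) = remainingMass θ e - θ e := by
  rw [remainingMass, remainingMass_val, Fin.filter_val_lt_succ_eq_Iic, ← sum_Iio_add_eq_sum_Iic]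
  ring

lemma tailWeight_of_le (w : Fin n → ℕ) {k : ℕ} (hk : n ≤ k) : tailWeight w k = 0 :=
  sum_eq_zero fun i hi => by simp at hi; omega

lemma tailWeight_val_add_one (w : Fin n → ℕ) (e : Fin n) :
    tailWeight w (e + 1) = ∑ i ∈ Ioi e, w i := by
  rw [tailWeight, Fin.filter_succ_le_val_eq_Ioi]

lemma tailWeight_val (w : Fin n → ℕ) (e : Fin n) :
    tailWeight w e = w e + tailWeight w (e + 1) := by
  rw [tailWeight, Fin.filter_le_val_eq_Ici, tailWeight_val_add_one, add_sum_Ioi_eq_sum_Ici]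

theorem prod_pow_eq_prod_stickBreaking (θ : Fin n → K) (w : Fin n → ℕ)
    (hθ : ∀ e, ∑ i ∈ Iio e, θ i ≠ 1) :
    ∏ e, θ e ^ w e =
      ∏ e, ((θ e / (1 - ∑ i ∈ Iio e, θ i)) ^ w e *
          (1 - θ e / (1 - ∑ i ∈ Iio e, θ i)) ^ (∑ i ∈ Ioi e, w i)) := by
  set g : ℕ → K := fun k => remainingMass θ k ^ tailWeight w k
  have hS : ∀ e : Fin n, remainingMass θ e ≠ 0 := fun e => by
    rw [remainingMass_val]; exact sub_ne_zero.mpr (hθ e).symm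
  have hfactor : ∀ e : Fin n, (θ e / (1 - ∑ i ∈ Iio e, θ i)) ^ w e *
      (1 - θ e / (1 - ∑ i ∈ Iio e, θ i)) ^ (∑ i ∈ Ioi e, w i) =
        θ e ^ w e * (g (e + 1) / g e) := by
    intro e
    rw [← remainingMass_val, div_pow_mul_one_sub_div_pow (hS e), ← remainingMass_val_add_one]
    simp only [g, tailWeight_val w e, tailWeight_val_add_one]
  have htelescope : ∏ e : Fin n, g (e + 1) / g e = 1 := by
    have := prod_range_div_mul_eq g fun k hk => pow_ne_zero _ (hS ⟨k, hk⟩)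
    simpa [g, remainingMass_zero, tailWeight_of_le w le_rfl, ← Fin.prod_univ_eq_prod_range]
      using this
  rw [prod_congr rfl fun e _ => hfactor e, prod_mul_distrib, htelescope, mul_one]

end StickBreaking

theorem multinomial_prob_telescope_general
    (E : ℕ) (w : Fin E → ℕ)
    (θ : Fin E → ℝ)
    (hθlt : ∀ e, ∑ i ∈ Finset.Iio e, θ i < 1) :
    ∏ e, θ e ^ w e =
      ∏ e,
        ((θ e / (1 - ∑ i ∈ Finset.Iio e, θ i)) ^ w e *
          (1 - θ e / (1 - ∑ i ∈ Finset.Iio e, θ i)) ^ (∑ i ∈ Finset.Ioi e, w i)) :=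
  StickBreaking.prod_pow_eq_prod_stickBreaking θ w fun e => (hθlt e).ne

/-- Telescoping of the multinomial probability term under the stick-breaking
reparameterization. -/
theorem multinomial_prob_telescope
    (E : ℕ) (hE : 1 ≤ E) (w : Fin E → ℕ)
    (θ : Fin E → ℝ) (hθ0 : ∀ e, 0 ≤ θ e) (hθsum : ∑ e, θ e = 1)
    (hθlt : ∀ e, ∑ i ∈ Finset.Iio e, θ i < 1) :
    ∏ e, θ e ^ w e =
      ∏ e,
        ((θ e / (1 - ∑ i ∈ Finset.Iio e, θ i)) ^ w e *
          (1 - θ e / (1 - ∑ i ∈ Finset.Iio e, θ i)) ^ (∑ i ∈ Finset.Ioi e, w i)) :=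
  multinomial_prob_telescope_general E w θ hθlt
end

section
/- (Multinomial as a chain of binomials and multinomials.) Let M ≥ 1, let E : Fin M → ℕ, let ι := Σ (m : Fin M), Fin (E m), and let θ : ι → ℝ with θ(x) ≥ 0 for all x and ∑_{x ∈ ι} θ(x) = 1. Set α(m) := ∑_{i} θ(⟨m,i⟩); assume α(m) > 0 for every m and ∑_{j<m} α(j) < 1 for every m, and define η(m) := α(m) / (1 − ∑_{j<m} α(j)) and λ(⟨m,i⟩) := θ(⟨m,i⟩) / α(m). Let u : ι → ℕ, set v(m) := ∑_{i} u(⟨m,i⟩), n := ∑_{m} v(m), and r(m) := n − ∑_{j<m} v(j). Then (n! / ∏_{x ∈ ι} u(x)!) · ∏_{x ∈ ι} θ(x)^{u(x)} = ∏_{m} [ C(r(m), v(m)) · η(m)^{v(m)} · (1 − η(m))^{r(m) − v(m)} ] · ∏_{m} [ (v(m)! / ∏_{i} u(⟨m,i⟩)!) · ∏_{i} λ(⟨m,i⟩)^{u(⟨m,i⟩)} ], with all factorials and binomial coefficients cast to ℝ. -/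
/-!
Peel off the groups one at a time, largest index last. With `r` balls and remaining mass
`c = 1 - ∑_{j<m} α j`, the binomial factor of group `m` times `c ^ r` equals
`α m ^ v m * (c - α m) ^ (r - v m)`, so the stick-breaking normalisations telescope and the
binomial factors multiply to `∏ α m ^ v m`; likewise the binomial coefficients telescope to
`n! / ∏ v m!`. Stating both facts with a leftover category (`∑ v ≤ n`) makes the induction go
through. Finally, inside each group `θ ⟨m, i⟩ = α m * λ ⟨m, i⟩`.
-/

open Finset Nat

namespace Finset

variable {ι : Type*} [LinearOrder ι] {s : Finset ι} {a m : ι}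

theorem filter_insert_lt_self (h : ∀ x ∈ s, x < a) : {j ∈ insert a s | j < a} = s := by
  rw [filter_insert, if_neg (lt_irrefl a), filter_true_of_mem h]

theorem filter_insert_lt_of_mem (h : ∀ x ∈ s, x < a) (hm : m ∈ s) :
    {j ∈ insert a s | j < m} = {j ∈ s | j < m} := by
  rw [filter_insert, if_neg (lt_asymm (h m hm))]

end Finset

theorem Nat.prod_choose_mul_prod_factorial {ι : Type*} [LinearOrder ι] (s : Finset ι)
    (v : ι → ℕ) {n : ℕ} (hn : ∑ j ∈ s, v j ≤ n) :
    (∏ m ∈ s, (n - ∑ j ∈ s with j < m, v j).choose (v m)) * (∏ m ∈ s, (v m)!) *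
      (n - ∑ j ∈ s, v j)! = n ! := by
  induction s using Finset.induction_on_max with
  | empty => simp
  | insert a s ha ih =>
    have has : a ∉ s := fun h => lt_irrefl a (ha a h)
    rw [sum_insert has] at hn ⊢
    rw [prod_insert has, prod_insert has, filter_insert_lt_self ha,
      prod_congr rfl fun m hm => by rw [filter_insert_lt_of_mem ha hm]]
    rw [← ih (by omega), ← choose_mul_factorial_mul_factorial (n := n - ∑ j ∈ s, v j) (k := v a)
      (by omega), Nat.sub_sub, add_comm (v a)]
    ring

theorem pow_mul_div_pow_mul_one_sub_div_pow {K : Type*} [Field K] {c : K} (hc : c ≠ 0) (x : K)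
    {k r : ℕ} (hk : k ≤ r) :
    c ^ r * ((x / c) ^ k * (1 - x / c) ^ (r - k)) = x ^ k * (c - x) ^ (r - k) := by
  rw [← Nat.add_sub_cancel' hk, pow_add, Nat.add_sub_cancel_left, one_sub_div hc, div_pow, div_pow]
  field_simp

theorem prod_stickBreaking_eq_prod_pow {ι K : Type*} [LinearOrder ι] [Field K] (s : Finset ι)
    (a : ι → K) (v : ι → ℕ) {n : ℕ} (hn : ∑ j ∈ s, v j ≤ n)
    (ha : ∀ m ∈ s, 1 - ∑ j ∈ s with j < m, a j ≠ 0) :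
    ∏ m ∈ s, ((a m / (1 - ∑ j ∈ s with j < m, a j)) ^ v m *
        (1 - a m / (1 - ∑ j ∈ s with j < m, a j)) ^ ((n - ∑ j ∈ s with j < m, v j) - v m)) =
      (∏ m ∈ s, a m ^ v m) * (1 - ∑ j ∈ s, a j) ^ (n - ∑ j ∈ s, v j) := by
  induction s using Finset.induction_on_max with
  | empty => simp
  | insert b s hb ih =>
    have hbs : b ∉ s := fun h => lt_irrefl b (hb b h)
    have hfilter : ∀ m ∈ s, {j ∈ insert b s | j < m} = {j ∈ s | j < m} :=
      fun m hm => filter_insert_lt_of_mem hb hm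
    have hab := ha b (mem_insert_self b s)
    rw [sum_insert hbs] at hn ⊢
    rw [filter_insert_lt_self hb] at hab
    rw [prod_insert hbs, prod_insert hbs, filter_insert_lt_self hb,
      prod_congr rfl fun m hm => by rw [hfilter m hm],
      ih (by omega) fun m hm => hfilter m hm ▸ ha m (mem_insert_of_mem hm),
      sum_insert hbs, Nat.sub_sub, add_comm (v b), ← Nat.sub_sub, sub_add_eq_sub_sub,
      sub_right_comm]
    linear_combination (∏ m ∈ s, a m ^ v m) *
      pow_mul_div_pow_mul_one_sub_div_pow hab (a b) (k := v b) (r := n - ∑ j ∈ s, v j) (by omega)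

theorem prod_pow_eq_pow_sum_mul_prod_div_pow {κ K : Type*} [Field K] (t : Finset κ) (f : κ → K)
    (k : κ → ℕ) {c : K} (hc : c ≠ 0) :
    ∏ i ∈ t, f i ^ k i = c ^ (∑ i ∈ t, k i) * ∏ i ∈ t, (f i / c) ^ k i := by
  simp only [div_pow, prod_div_distrib, prod_pow_eq_pow_sum]
  field_simp

theorem multinomial_chain_binomial_multinomial_general
    (M : ℕ) (E : Fin M → ℕ)
    (θ : ((m : Fin M) × Fin (E m)) → ℝ)
    (hα : ∀ m : Fin M, 0 < ∑ i : Fin (E m), θ ⟨m, i⟩)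
    (hαlt : ∀ m : Fin M, ∑ j ∈ Finset.Iio m, (∑ i : Fin (E j), θ ⟨j, i⟩) < 1)
    (u : ((m : Fin M) × Fin (E m)) → ℕ)
    (v : Fin M → ℕ) (hv : ∀ m : Fin M, v m = ∑ i : Fin (E m), u ⟨m, i⟩)
    (n : ℕ) (hn : n = ∑ m, v m) :
    (Nat.factorial n : ℝ) / (∏ x, (Nat.factorial (u x) : ℝ)) * ∏ x, θ x ^ u x =
      (∏ m,
        ((Nat.choose (n - ∑ j ∈ Finset.Iio m, v j) (v m) : ℝ) *
          ((∑ i : Fin (E m), θ ⟨m, i⟩) /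
              (1 - ∑ j ∈ Finset.Iio m, (∑ i : Fin (E j), θ ⟨j, i⟩))) ^ v m *
          (1 - (∑ i : Fin (E m), θ ⟨m, i⟩) /
              (1 - ∑ j ∈ Finset.Iio m, (∑ i : Fin (E j), θ ⟨j, i⟩))) ^
            ((n - ∑ j ∈ Finset.Iio m, v j) - v m))) *
      ∏ m,
        ((Nat.factorial (v m) : ℝ) / (∏ i, (Nat.factorial (u ⟨m, i⟩) : ℝ)) *
          ∏ i : Fin (E m),
            (θ ⟨m, i⟩ / ∑ j : Fin (E m), θ ⟨m, j⟩) ^ u ⟨m, i⟩) := by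
  have hfactorial : (n ! : ℝ) =
      (∏ m, ((n - ∑ j ∈ Iio m, v j).choose (v m) : ℝ)) * ∏ m, ((v m)! : ℝ) := by
    have := Nat.prod_choose_mul_prod_factorial univ v hn.ge
    simp only [filter_gt_eq_Iio, ← hn, Nat.sub_self, factorial_zero, mul_one] at this
    exact_mod_cast this.symm
  have hstick := prod_stickBreaking_eq_prod_pow univ (fun m => ∑ i, θ ⟨m, i⟩) v hn.ge fun m _ => by
    rw [filter_gt_eq_Iio]; exact (sub_pos.mpr (hαlt m)).ne'
  simp only [filter_gt_eq_Iio, ← hn, Nat.sub_self, pow_zero, mul_one] at hstick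
  have hgroup (m : Fin M) : ∏ i, θ ⟨m, i⟩ ^ u ⟨m, i⟩ =
      (∑ i, θ ⟨m, i⟩) ^ v m * ∏ i, (θ ⟨m, i⟩ / ∑ j, θ ⟨m, j⟩) ^ u ⟨m, i⟩ := by
    rw [hv m]; exact prod_pow_eq_pow_sum_mul_prod_div_pow _ _ _ (hα m).ne'
  rw [Fintype.prod_sigma, Fintype.prod_sigma, prod_congr rfl fun m _ => hgroup m, hfactorial]
  simp only [mul_assoc, prod_mul_distrib, hstick, prod_div_distrib]
  ring

/-- Multinomial as a chain of binomials and multinomials: the multinomial weight of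
`u` equals the product over groups of a binomial stick-breaking factor for the group
sum times the within-group multinomial weight. -/
theorem multinomial_chain_binomial_multinomial
    (M : ℕ) (hM : 1 ≤ M) (E : Fin M → ℕ)
    (θ : ((m : Fin M) × Fin (E m)) → ℝ) (hθ0 : ∀ x, 0 ≤ θ x)
    (hθsum : ∑ x : (m : Fin M) × Fin (E m), θ x = 1)
    (hα : ∀ m : Fin M, 0 < ∑ i : Fin (E m), θ ⟨m, i⟩)
    (hαlt : ∀ m : Fin M, ∑ j ∈ Finset.Iio m, (∑ i : Fin (E j), θ ⟨j, i⟩) < 1)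
    (u : ((m : Fin M) × Fin (E m)) → ℕ)
    (v : Fin M → ℕ) (hv : ∀ m : Fin M, v m = ∑ i : Fin (E m), u ⟨m, i⟩)
    (n : ℕ) (hn : n = ∑ m, v m) :
    (Nat.factorial n : ℝ) / (∏ x, (Nat.factorial (u x) : ℝ)) * ∏ x, θ x ^ u x =
      (∏ m,
        ((Nat.choose (n - ∑ j ∈ Finset.Iio m, v j) (v m) : ℝ) *
          ((∑ i : Fin (E m), θ ⟨m, i⟩) /
              (1 - ∑ j ∈ Finset.Iio m, (∑ i : Fin (E j), θ ⟨j, i⟩))) ^ v m *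
          (1 - (∑ i : Fin (E m), θ ⟨m, i⟩) /
              (1 - ∑ j ∈ Finset.Iio m, (∑ i : Fin (E j), θ ⟨j, i⟩))) ^
            ((n - ∑ j ∈ Finset.Iio m, v j) - v m))) *
      ∏ m,
        ((Nat.factorial (v m) : ℝ) / (∏ i, (Nat.factorial (u ⟨m, i⟩) : ℝ)) *
          ∏ i : Fin (E m),
            (θ ⟨m, i⟩ / ∑ j : Fin (E m), θ ⟨m, j⟩) ^ u ⟨m, i⟩) :=
  multinomial_chain_binomial_multinomial_general M E θ hα hαlt u v hv n hn
end
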